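/- arXiv:1809.09268 — 2 statements merged into one kernel-verified Lean document; each statement's English description precedes it below -/
import Mathlib

section
/- Let 0 ≤ x₀ < 𝔼[γ(X)·X] and let 𝒢_ns be the set of measurable g : ℝ → ℝ with 𝔼[γ(X)·g(X)] ≥ x₀ and 0 ≤ g(X) ≤ X almost surely, and set q := inf{VaR_p(g(X)) : g ∈ 𝒢_ns}. Then there exists g* ∈ 𝒢_ns with VaR_p(g*(X)) = q, and moreover q < VaR_p(X). -/
open MeasureTheory Filter
open scoped ENNReal Topology Classical

noncomputable def VaR {Ω : Type*} [MeasurableSpace Ω] (P : Measure Ω) (p : ℝ) (Y : Ω → ℝ) : ℝ :=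
  sInf {x : ℝ | p ≤ (P {ω | Y ω ≤ x}).toReal}

noncomputable def ES {Ω : Type*} [MeasurableSpace Ω] (P : Measure Ω) (p : ℝ) (Y : Ω → ℝ) : ℝ :=
  (1 - p)⁻¹ * ∫ u in p..(1 : ℝ), VaR P u Y

/-- The probability space is atomless. -/
def Atomless {Ω : Type*} [MeasurableSpace Ω] (P : Measure Ω) : Prop :=
  ∀ s : Set Ω, MeasurableSet s → 0 < P s →
    ∃ t, t ⊆ s ∧ MeasurableSet t ∧ 0 < P t ∧ P t < P s

/-- The (topological) support of a measure on ℝ. -/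
def msupport (μ : Measure ℝ) : Set ℝ :=
  {x | ∀ ε > 0, 0 < μ (Set.Ioo (x - ε) (x + ε))}

/-- The distribution `μ` has a density (w.r.t. Lebesgue measure) which is positive
on the support of `μ`. -/
def HasPositiveDensityOnSupport (μ : Measure ℝ) : Prop :=
  ∃ f : ℝ → ℝ, Measurable f ∧
    μ = MeasureTheory.volume.withDensity (fun x => ENNReal.ofReal (f x)) ∧
    ∀ x ∈ msupport μ, 0 < f x

/-- The distribution `μ` has a density (w.r.t. Lebesgue measure) which is decreasing
(and positive) on the support of `μ`. -/
def HasDecreasingDensityOnSupport (μ : Measure ℝ) : Prop :=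
  ∃ f : ℝ → ℝ, Measurable f ∧
    μ = MeasureTheory.volume.withDensity (fun x => ENNReal.ofReal (f x)) ∧
    AntitoneOn f (msupport μ) ∧ ∀ x ∈ msupport μ, 0 < f x

/-- Membership in the admissible set 𝒢_cm (complete market): measurable `g` with
budget constraint `𝔼[γ(X)·g(X)] ≥ x₀`. -/
def memGcm {Ω : Type*} [MeasurableSpace Ω] (P : Measure Ω) (X : Ω → ℝ) (γ : ℝ → ℝ)
    (x₀ : ℝ) (g : ℝ → ℝ) : Prop :=
  Measurable g ∧ Integrable (fun ω => γ (X ω) * g (X ω)) P ∧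
    x₀ ≤ ∫ ω, γ (X ω) * g (X ω) ∂P

/-- Membership in the admissible set 𝒢_ns (no short-selling):
`𝔼[γ(X)·g(X)] ≥ x₀` and `0 ≤ g(X) ≤ X` a.s. -/
def memGns {Ω : Type*} [MeasurableSpace Ω] (P : Measure Ω) (X : Ω → ℝ) (γ : ℝ → ℝ)
    (x₀ : ℝ) (g : ℝ → ℝ) : Prop :=
  Measurable g ∧ Integrable (fun ω => γ (X ω) * g (X ω)) P ∧
    x₀ ≤ ∫ ω, γ (X ω) * g (X ω) ∂P ∧
    (∀ᵐ ω ∂P, 0 ≤ g (X ω) ∧ g (X ω) ≤ X ω)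

/-- Membership in the admissible set 𝒢_bd (bounded positions):
`𝔼[γ(X)·g(X)] ≥ x₀` and `0 ≤ g(X) ≤ m` a.s. -/
def memGbd {Ω : Type*} [MeasurableSpace Ω] (P : Measure Ω) (X : Ω → ℝ) (γ : ℝ → ℝ)
    (x₀ m : ℝ) (g : ℝ → ℝ) : Prop :=
  Measurable g ∧ Integrable (fun ω => γ (X ω) * g (X ω)) P ∧
    x₀ ≤ ∫ ω, γ (X ω) * g (X ω) ∂P ∧
    (∀ᵐ ω ∂P, 0 ≤ g (X ω) ∧ g (X ω) ≤ m)

/-!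
Everything is transported to the law `μ` of `X`. Capping the payoff `x` at level `t` on an
event `A` costs `∫_A γ(x) (x - t)⁺ dμ`; since `μ` has no atoms, a Neyman–Pearson argument gives
an event of probability `p` on which this cost is minimal, with minimum `D(t)` (`minCapCost`).
A feasible `g` satisfies `g ≤ s := VaR_p(g)` on an event of probability at least `p`, so its
price is at most `𝔼[γ(X) X] - D(s)`; hence every feasible VaR lies in
`{t ≥ 0 | D(t) ≤ 𝔼[γ(X) X] - x₀}`, whose infimum `t*` (`optimalCap`) is the optimal value.
As `D(s) ≤ D(t) + (t - s)` for `s ≤ t`, the infimum belongs to this set, and capping `X` at `t*`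
on the optimal event attains it. Finally `D` vanishes at `VaR_p(X) > 0`, and the same bound
pushes `t*` strictly below `VaR_p(X)`.
-/

open Set ProbabilityTheory

namespace StieltjesFunction

variable {F : StieltjesFunction ℝ} {p : ℝ}

lemma bddBelow_setOf_le (hF : Tendsto F atBot (𝓝 0)) (hp : 0 < p) :
    BddBelow {x | p ≤ F x} := by
  obtain ⟨a, ha⟩ := (hF.eventually (gt_mem_nhds hp)).exists_forall_of_atBot
  exact ⟨a, fun x hx => le_of_not_gt fun hxa => (ha x hxa.le).not_ge hx⟩

lemma setOf_le_nonempty (hF : Tendsto F atTop (𝓝 1)) (hp : p < 1) :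
    {x | p ≤ F x}.Nonempty :=
  ((hF.eventually (lt_mem_nhds hp)).exists).imp fun _ hx => hx.le

lemma le_apply_sInf (hne : {x | p ≤ F x}.Nonempty) : p ≤ F (sInf {x | p ≤ F x}) := by
  refine ge_of_tendsto ((F.right_continuous _).mono Ioi_subset_Ici_self) ?_
  filter_upwards [self_mem_nhdsWithin] with x hx
  obtain ⟨y, hy, hyx⟩ := exists_lt_of_csInf_lt hne hx
  exact hy.trans (F.mono hyx.le)

lemma leftLim_sInf_le (hbdd : BddBelow {x | p ≤ F x}) :
    Function.leftLim F (sInf {x | p ≤ F x}) ≤ p := by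
  refine le_of_tendsto (F.mono.tendsto_leftLim _) ?_
  filter_upwards [self_mem_nhdsWithin] with x hx
  exact (not_le.mp fun h => (csInf_le hbdd h).not_gt hx).le

end StieltjesFunction

section VaR

variable {Ω : Type*} [MeasurableSpace Ω] {P : Measure Ω} [IsProbabilityMeasure P]
  {Y : Ω → ℝ} {p : ℝ}

lemma measureReal_le_eq_cdf_map (hY : Measurable Y) (x : ℝ) :
    P.real {ω | Y ω ≤ x} = cdf (P.map Y) x := by
  have := Measure.isProbabilityMeasure_map (μ := P) hY.aemeasurable
  rw [cdf_eq_real, map_measureReal_apply hY measurableSet_Iic]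
  rfl

lemma measureReal_lt_eq_leftLim_cdf_map (hY : Measurable Y) (x : ℝ) :
    P.real {ω | Y ω < x} = Function.leftLim (cdf (P.map Y)) x := by
  have := Measure.isProbabilityMeasure_map (μ := P) hY.aemeasurable
  change (P (Y ⁻¹' Iio x)).toReal = _
  rw [← Measure.map_apply hY measurableSet_Iio]
  conv_lhs => rw [← measure_cdf (P.map Y)]
  rw [StieltjesFunction.measure_Iio _ (tendsto_cdf_atBot _), sub_zero, ENNReal.toReal_ofReal]
  exact (cdf_nonneg _ (x - 1)).trans ((monotone_cdf _).le_leftLim (sub_one_lt x))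

lemma VaR_eq_sInf_cdf (hY : Measurable Y) :
    VaR P p Y = sInf {x | p ≤ cdf (P.map Y) x} := by
  simp only [VaR, ← measureReal_def, measureReal_le_eq_cdf_map hY]

lemma VaR_le (hY : Measurable Y) (hp : 0 < p) {x : ℝ} (hx : p ≤ P.real {ω | Y ω ≤ x}) :
    VaR P p Y ≤ x := by
  rw [measureReal_le_eq_cdf_map hY] at hx
  rw [VaR_eq_sInf_cdf hY]
  exact csInf_le ((cdf _).bddBelow_setOf_le (tendsto_cdf_atBot _) hp) hx

lemma le_measureReal_le_VaR (hY : Measurable Y) (hp : p < 1) :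
    p ≤ P.real {ω | Y ω ≤ VaR P p Y} := by
  rw [measureReal_le_eq_cdf_map hY, VaR_eq_sInf_cdf hY]
  exact (cdf _).le_apply_sInf ((cdf _).setOf_le_nonempty (tendsto_cdf_atTop _) hp)

lemma measureReal_lt_VaR_le (hY : Measurable Y) (hp : 0 < p) :
    P.real {ω | Y ω < VaR P p Y} ≤ p := by
  rw [measureReal_lt_eq_leftLim_cdf_map hY, VaR_eq_sInf_cdf hY]
  exact (cdf _).leftLim_sInf_le ((cdf _).bddBelow_setOf_le (tendsto_cdf_atBot _) hp)

lemma lt_VaR_of_measure_le_eq_zero (hY : Measurable Y) (hp : p ∈ Ioo 0 1) {x : ℝ}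
    (hx : P {ω | Y ω ≤ x} = 0) : x < VaR P p Y := by
  by_contra! h
  have hsub : {ω | Y ω ≤ VaR P p Y} ⊆ {ω | Y ω ≤ x} := fun ω hω => le_trans hω h
  have := (le_measureReal_le_VaR hY hp.2).trans (measureReal_mono hsub)
  rw [measureReal_def, hx, ENNReal.toReal_zero] at this
  linarith [hp.1]

lemma VaR_nonneg (hY : Measurable Y) (hp : p ∈ Ioo 0 1) (hY0 : ∀ᵐ ω ∂P, 0 ≤ Y ω) :
    0 ≤ VaR P p Y :=
  le_of_forall_lt fun x hx => lt_VaR_of_measure_le_eq_zero hY hp <|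
    measure_mono_null (fun ω (hω : Y ω ≤ x) => not_le.mpr (hω.trans_lt hx)) (ae_iff.mp hY0)

end VaR

lemma exists_subset_measureReal_eq (μ : Measure ℝ) [IsFiniteMeasure μ] [NullSingletonClass μ]
    {E : Set ℝ} (hE : MeasurableSet E) {m : ℝ} (hm0 : 0 ≤ m) (hm : m ≤ μ.real E) :
    ∃ S ⊆ E, MeasurableSet S ∧ μ.real S = m := by
  rcases hm0.eq_or_lt with rfl | hm0
  · exact ⟨∅, empty_subset _, .empty, measureReal_empty⟩
  rcases hm.eq_or_lt with rfl | hm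
  · exact ⟨E, subset_rfl, hE, rfl⟩
  set f : ℝ → ℝ := fun t => (μ.restrict E (Iic t)).toReal
  have hcont : Continuous f := by
    have hf : f = fun t => ∫ _ in Iic t, (1 : ℝ) ∂μ.restrict E := by ext; simp [f, Measure.real]
    exact hf ▸ continuous_iff_continuousAt.mpr fun t =>
      ((integrableOn_const (measure_ne_top _ _)).continuousOn_Iic_primitive_Iic).continuousAt
        (Iic_mem_nhds (lt_add_one t))
  have hbot : Tendsto f atBot (𝓝 0) := by
    have hempty : ⋂ t : ℝ, Iic t = ∅ :=
      iInter_Iic_eq_empty_iff.mpr (by rw [range_id']; exact not_bddBelow_univ)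
    have := tendsto_measure_iInter_atBot (μ := μ.restrict E)
      (fun _ => measurableSet_Iic.nullMeasurableSet) monotone_Iic ⟨0, measure_ne_top _ _⟩
    rw [hempty, measure_empty] at this
    exact (ENNReal.tendsto_toReal ENNReal.zero_ne_top).comp this
  have htop : Tendsto f atTop (𝓝 (μ.real E)) := by
    have := (ENNReal.tendsto_toReal (measure_ne_top _ _)).comp
      (tendsto_measure_Iic_atTop (μ.restrict E))
    rwa [Measure.restrict_apply_univ] at this
  obtain ⟨t, ht⟩ := mem_range_of_exists_le_of_exists_ge hcont
    ((hbot.eventually (gt_mem_nhds hm0)).exists.imp fun _ h => h.le)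
    ((htop.eventually (lt_mem_nhds hm)).exists.imp fun _ h => h.le)
  refine ⟨E ∩ Iic t, inter_subset_left, hE.inter measurableSet_Iic, ?_⟩
  rw [← ht, Measure.real, inter_comm, ← Measure.restrict_apply measurableSet_Iic]

lemma setIntegral_le_setIntegral_of_le_level {α : Type*} [MeasurableSpace α] {μ : Measure α}
    [IsFiniteMeasure μ] {c : α → ℝ} (hc : Integrable c μ) {A B : Set α} (hA : MeasurableSet A)
    (hB : MeasurableSet B) {l : ℝ} (hl : 0 ≤ l) (hcA : ∀ x ∈ A, c x ≤ l)
    (hcAc : ∀ x ∉ A, l ≤ c x) (hAB : μ.real A ≤ μ.real B) :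
    ∫ x in A, c x ∂μ ≤ ∫ x in B, c x ∂μ := by
  have hdiff : μ.real (A \ B) ≤ μ.real (B \ A) := by
    have hA' := measureReal_inter_add_sdiff (μ := μ) (s := A) hB
    have hB' := measureReal_inter_add_sdiff (μ := μ) (s := B) hA
    rw [inter_comm] at hB'
    linarith
  have hdiffInt : ∫ x in A \ B, c x ∂μ ≤ ∫ x in B \ A, c x ∂μ :=
    calc ∫ x in A \ B, c x ∂μ ≤ ∫ _ in A \ B, l ∂μ :=
          setIntegral_mono_on hc.integrableOn (integrableOn_const (measure_ne_top _ _))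
            (hA.diff hB) fun x hx => hcA x hx.1
      _ = μ.real (A \ B) * l := by rw [setIntegral_const, smul_eq_mul]
      _ ≤ μ.real (B \ A) * l := mul_le_mul_of_nonneg_right hdiff hl
      _ = ∫ _ in B \ A, l ∂μ := by rw [setIntegral_const, smul_eq_mul]
      _ ≤ ∫ x in B \ A, c x ∂μ :=
          setIntegral_mono_on (integrableOn_const (measure_ne_top _ _)) hc.integrableOn
            (hB.diff hA) fun x hx => hcAc x hx.2
  have hA' := integral_inter_add_sdiff hB (hc.integrableOn (s := A))
  have hB' := integral_inter_add_sdiff hA (hc.integrableOn (s := B))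
  rw [inter_comm] at hB'
  linarith

lemma exists_measureReal_eq_forall_setIntegral_le (μ : Measure ℝ) [IsProbabilityMeasure μ]
    [NullSingletonClass μ] {c : ℝ → ℝ} (hcm : Measurable c) (hc0 : ∀ x, 0 ≤ c x)
    (hci : Integrable c μ) {p : ℝ} (hp : p ∈ Ioo 0 1) :
    ∃ A, MeasurableSet A ∧ μ.real A = p ∧
      ∀ B, MeasurableSet B → p ≤ μ.real B → ∫ x in A, c x ∂μ ≤ ∫ x in B, c x ∂μ := by
  set l := VaR μ p c
  have hlt : MeasurableSet {x | c x < l} := measurableSet_lt hcm measurable_const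
  have heq : MeasurableSet {x | c x = l} := measurableSet_eq_fun hcm measurable_const
  have hsplit : μ.real {x | c x ≤ l} = μ.real {x | c x < l} + μ.real {x | c x = l} := by
    rw [← measureReal_union (disjoint_left.mpr fun x h h' => h.ne h') heq]
    congr 1
    ext x
    exact le_iff_lt_or_eq (a := c x)
  have hlow := measureReal_lt_VaR_le hcm hp.1 (P := μ)
  have hhigh := le_measureReal_le_VaR hcm hp.2 (P := μ)
  obtain ⟨S, hSsub, hS, hSp⟩ := exists_subset_measureReal_eq μ heq (sub_nonneg.mpr hlow)
    (by linarith)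
  have hdisj : Disjoint {x | c x < l} S :=
    disjoint_left.mpr fun x h h' => h.ne (hSsub h')
  refine ⟨{x | c x < l} ∪ S, hlt.union hS, ?_, fun B hB hpB => ?_⟩
  · rw [measureReal_union hdisj hS, hSp]
    ring
  refine setIntegral_le_setIntegral_of_le_level hci (hlt.union hS) hB
    (VaR_nonneg hcm hp (ae_of_all μ hc0)) ?_ ?_ ?_
  · rintro x (hx | hx)
    exacts [le_of_lt hx, (show c x = l from hSsub hx).le]
  · exact fun x hx => not_lt.mp fun h => hx (Or.inl h)
  · rw [measureReal_union hdisj hS, hSp]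
    linarith

structure IsPricingKernel (μ : Measure ℝ) (γ : ℝ → ℝ) : Prop where
  measurable : Measurable γ
  nonneg : ∀ x, 0 ≤ γ x
  integrable : Integrable γ μ
  integral_le_one : ∫ x, γ x ∂μ ≤ 1
  integrable_mul_id : Integrable (fun x => γ x * x) μ

def capCost (γ : ℝ → ℝ) (t x : ℝ) : ℝ := γ x * max (x - t) 0

section capCost

variable {γ : ℝ → ℝ} {s t x : ℝ}

lemma capCost_nonneg (hγ : 0 ≤ γ x) : 0 ≤ capCost γ t x :=
  mul_nonneg hγ (le_max_right _ _)

lemma capCost_of_le (hxt : x ≤ t) : capCost γ t x = 0 := by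
  simp [capCost, hxt]

lemma capCost_le_add (hγ : 0 ≤ γ x) (hst : s ≤ t) :
    capCost γ s x ≤ capCost γ t x + (t - s) * γ x := by
  have : max (x - s) 0 ≤ max (x - t) 0 + (t - s) :=
    max_le (by linarith [le_max_left (x - t) 0]) (by linarith [le_max_right (x - t) 0])
  unfold capCost
  nlinarith

lemma capCost_le_mul_sub (hγ : 0 ≤ γ x) {y : ℝ} (hyt : y ≤ t) (hyx : y ≤ x) :
    capCost γ t x ≤ γ x * (x - y) :=
  mul_le_mul_of_nonneg_left (max_le (by linarith) (by linarith)) hγ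

lemma measurable_capCost (hγ : Measurable γ) (t : ℝ) : Measurable (capCost γ t) := by
  unfold capCost
  fun_prop

lemma integrable_capCost {μ : Measure ℝ} (hγ : IsPricingKernel μ γ) (t : ℝ) :
    Integrable (capCost γ t) μ := by
  refine (hγ.integrable_mul_id.norm.add (hγ.integrable.norm.const_mul |t|)).mono'
    (measurable_capCost hγ.measurable t).aestronglyMeasurable (ae_of_all _ fun x => ?_)
  have hmax : max (x - t) 0 ≤ |x| + |t| :=
    max_le (by linarith [le_abs_self x, neg_abs_le t]) (by positivity)
  simp only [capCost, Pi.add_apply, norm_mul, Real.norm_eq_abs,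
    abs_of_nonneg (le_max_right (x - t) 0)]
  nlinarith [abs_nonneg (γ x)]

end capCost

noncomputable def minCapCost (μ : Measure ℝ) (p : ℝ) (γ : ℝ → ℝ) (t : ℝ) : ℝ :=
  sInf ((fun B => ∫ x in B, capCost γ t x ∂μ) '' {B | MeasurableSet B ∧ p ≤ μ.real B})

noncomputable def optimalCap (μ : Measure ℝ) (p : ℝ) (γ : ℝ → ℝ) (δ : ℝ) : ℝ :=
  sInf {t | 0 ≤ t ∧ minCapCost μ p γ t ≤ δ}

section minCapCost

variable {μ : Measure ℝ} {p : ℝ} {γ : ℝ → ℝ} {δ s t : ℝ}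

lemma minCapCost_le (hγ : ∀ x, 0 ≤ γ x) {B : Set ℝ} (hB : MeasurableSet B)
    (hpB : p ≤ μ.real B) : minCapCost μ p γ t ≤ ∫ x in B, capCost γ t x ∂μ :=
  csInf_le ⟨0, by
    rintro _ ⟨B, ⟨hB, -⟩, rfl⟩
    exact setIntegral_nonneg hB fun x _ => capCost_nonneg (hγ x)⟩ ⟨B, ⟨hB, hpB⟩, rfl⟩

lemma exists_setIntegral_capCost_eq_minCapCost [IsProbabilityMeasure μ] [NullSingletonClass μ]
    (hγ : IsPricingKernel μ γ) (hp : p ∈ Ioo 0 1) (t : ℝ) :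
    ∃ A, MeasurableSet A ∧ p ≤ μ.real A ∧ ∫ x in A, capCost γ t x ∂μ = minCapCost μ p γ t := by
  obtain ⟨A, hA, hAp, hmin⟩ := exists_measureReal_eq_forall_setIntegral_le μ
    (measurable_capCost hγ.measurable t) (fun x => capCost_nonneg (hγ.nonneg x))
    (integrable_capCost hγ t) hp
  refine ⟨A, hA, hAp.ge, le_antisymm (le_csInf ⟨_, A, ⟨hA, hAp.ge⟩, rfl⟩ ?_)
    (minCapCost_le hγ.nonneg hA hAp.ge)⟩
  rintro _ ⟨B, ⟨hB, hpB⟩, rfl⟩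
  exact hmin B hB hpB

lemma minCapCost_le_add [IsProbabilityMeasure μ] [NullSingletonClass μ]
    (hγ : IsPricingKernel μ γ) (hp : p ∈ Ioo 0 1) (hst : s ≤ t) :
    minCapCost μ p γ s ≤ minCapCost μ p γ t + (t - s) := by
  obtain ⟨A, hA, hpA, hAt⟩ := exists_setIntegral_capCost_eq_minCapCost hγ hp t
  have hγA : ∫ x in A, γ x ∂μ ≤ 1 :=
    (setIntegral_le_integral hγ.integrable (ae_of_all _ hγ.nonneg)).trans hγ.integral_le_one
  calc minCapCost μ p γ s ≤ ∫ x in A, capCost γ s x ∂μ := minCapCost_le hγ.nonneg hA hpA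
    _ ≤ ∫ x in A, (capCost γ t x + (t - s) * γ x) ∂μ :=
        setIntegral_mono_on (integrable_capCost hγ s).integrableOn
          ((integrable_capCost hγ t).add (hγ.integrable.const_mul _)).integrableOn hA
          fun x _ => capCost_le_add (hγ.nonneg x) hst
    _ = minCapCost μ p γ t + (t - s) * ∫ x in A, γ x ∂μ := by
        rw [integral_add (integrable_capCost hγ t).integrableOn
          (hγ.integrable.const_mul _).integrableOn, integral_const_mul, hAt]
    _ ≤ minCapCost μ p γ t + (t - s) := by nlinarith

lemma minCapCost_nonpos (hγ : ∀ x, 0 ≤ γ x) (ht : p ≤ μ.real (Iic t)) :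
    minCapCost μ p γ t ≤ 0 :=
  (minCapCost_le hγ measurableSet_Iic ht).trans_eq
    (setIntegral_eq_zero_of_forall_eq_zero fun _ hx => capCost_of_le hx)

end minCapCost

section optimalCap

variable {μ : Measure ℝ} {p : ℝ} {γ : ℝ → ℝ} {δ t : ℝ}

lemma optimalCap_le (ht : 0 ≤ t) (htδ : minCapCost μ p γ t ≤ δ) : optimalCap μ p γ δ ≤ t :=
  csInf_le ⟨0, fun _ h => h.1⟩ ⟨ht, htδ⟩

lemma optimalCap_nonneg (ht : 0 ≤ t) (htδ : minCapCost μ p γ t ≤ δ) : 0 ≤ optimalCap μ p γ δ :=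
  le_csInf ⟨t, ht, htδ⟩ fun _ h => h.1

lemma minCapCost_optimalCap_le [IsProbabilityMeasure μ] [NullSingletonClass μ]
    (hγ : IsPricingKernel μ γ) (hp : p ∈ Ioo 0 1) (ht : 0 ≤ t)
    (htδ : minCapCost μ p γ t ≤ δ) : minCapCost μ p γ (optimalCap μ p γ δ) ≤ δ := by
  refine le_of_forall_pos_le_add fun ε hε => ?_
  obtain ⟨s, ⟨hs, hsδ⟩, hslt⟩ := exists_lt_of_csInf_lt
    (s := {t | 0 ≤ t ∧ minCapCost μ p γ t ≤ δ}) ⟨t, ht, htδ⟩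
    (lt_add_of_pos_right (optimalCap μ p γ δ) hε)
  have := minCapCost_le_add hγ hp (optimalCap_le hs hsδ)
  change _ < optimalCap μ p γ δ + ε at hslt
  linarith

end optimalCap

noncomputable def capOn (A : Set ℝ) (t : ℝ) : ℝ → ℝ := A.piecewise (fun x => min x t) id

section capOn

variable {A : Set ℝ} {t x : ℝ}

lemma measurable_capOn (hA : MeasurableSet A) : Measurable (capOn A t) :=
  Measurable.piecewise hA (by fun_prop) measurable_id

lemma mul_capOn (γ : ℝ → ℝ) : γ x * capOn A t x = γ x * x - A.indicator (capCost γ t) x := by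
  by_cases hx : x ∈ A
  · simp only [capOn, piecewise_eq_of_mem _ _ _ hx, indicator_of_mem hx, capCost]
    rw [← mul_sub, ← min_sub_sub_left, sub_sub_cancel, sub_zero, min_comm]
  · simp [capOn, hx]

lemma capOn_mem_Icc (hx : 0 ≤ x) (ht : 0 ≤ t) : capOn A t x ∈ Icc 0 x := by
  by_cases hxA : x ∈ A
  · simp only [capOn, piecewise_eq_of_mem _ _ _ hxA]
    exact ⟨le_min hx ht, min_le_left _ _⟩
  · simp [capOn, hxA, hx]

lemma capOn_le_of_mem (hx : x ∈ A) : capOn A t x ≤ t := by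
  simp only [capOn, piecewise_eq_of_mem _ _ _ hx]
  exact min_le_right _ _

end capOn

section Optimization

variable {μ : Measure ℝ} [IsProbabilityMeasure μ] {p : ℝ} {γ : ℝ → ℝ} {x₀ : ℝ}

lemma optimalCap_le_VaR (hγ : IsPricingKernel μ γ) (hp : p ∈ Ioo 0 1) {g : ℝ → ℝ}
    (hg : memGns μ id γ x₀ g) :
    optimalCap μ p γ (∫ x, γ x * x ∂μ - x₀) ≤ VaR μ p g := by
  obtain ⟨hgm, hgi, hbudget, hg0⟩ := hg
  simp only [id] at hgi hbudget hg0
  set v := VaR μ p g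
  have hB : MeasurableSet {x | g x ≤ v} := measurableSet_le hgm measurable_const
  have hshortfall : Integrable (fun x => γ x * (x - g x)) μ :=
    (hγ.integrable_mul_id.sub hgi).congr (ae_of_all _ fun x => by simp only [Pi.sub_apply]; ring)
  refine optimalCap_le (VaR_nonneg hgm hp (hg0.mono fun x hx => hx.1)) ?_
  calc minCapCost μ p γ v ≤ ∫ x in {x | g x ≤ v}, capCost γ v x ∂μ :=
        minCapCost_le hγ.nonneg hB (le_measureReal_le_VaR hgm hp.2)
    _ ≤ ∫ x in {x | g x ≤ v}, γ x * (x - g x) ∂μ :=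
        setIntegral_mono_on_ae (integrable_capCost hγ v).integrableOn
          hshortfall.integrableOn hB (hg0.mono fun x hx hxB =>
            capCost_le_mul_sub (hγ.nonneg x) hxB hx.2)
    _ ≤ ∫ x, γ x * (x - g x) ∂μ :=
        setIntegral_le_integral hshortfall
          (hg0.mono fun x hx => mul_nonneg (hγ.nonneg x) (sub_nonneg.mpr hx.2))
    _ = ∫ x, γ x * x ∂μ - ∫ x, γ x * g x ∂μ := by
        rw [← integral_sub hγ.integrable_mul_id hgi]
        simp only [mul_sub]
    _ ≤ ∫ x, γ x * x ∂μ - x₀ := by linarith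

lemma minCapCost_VaR_id_nonpos (hγ : ∀ x, 0 ≤ γ x) (hp : p < 1) :
    minCapCost μ p γ (VaR μ p id) ≤ 0 :=
  minCapCost_nonpos hγ (le_measureReal_le_VaR measurable_id hp)

variable [NullSingletonClass μ]

lemma exists_memGns_VaR_le_optimalCap (hγ : IsPricingKernel μ γ) (hp : p ∈ Ioo 0 1)
    (hμ : ∀ᵐ x ∂μ, 0 ≤ x) (hx₀ : x₀ ≤ ∫ x, γ x * x ∂μ) :
    ∃ g, memGns μ id γ x₀ g ∧ VaR μ p g ≤ optimalCap μ p γ (∫ x, γ x * x ∂μ - x₀) := by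
  set t := optimalCap μ p γ (∫ x, γ x * x ∂μ - x₀)
  have hv0 : 0 ≤ VaR μ p id := VaR_nonneg measurable_id hp hμ
  have hvδ : minCapCost μ p γ (VaR μ p id) ≤ ∫ x, γ x * x ∂μ - x₀ :=
    (minCapCost_VaR_id_nonpos hγ.nonneg hp.2).trans (sub_nonneg.mpr hx₀)
  have ht0 : 0 ≤ t := optimalCap_nonneg hv0 hvδ
  obtain ⟨A, hA, hpA, hAt⟩ := exists_setIntegral_capCost_eq_minCapCost hγ hp t
  have hcapCost := (integrable_capCost hγ t).indicator hA
  refine ⟨capOn A t, ⟨measurable_capOn hA, ?_, ?_, hμ.mono fun x hx => capOn_mem_Icc hx ht0⟩,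
    VaR_le (measurable_capOn hA) hp.1
      (hpA.trans (measureReal_mono fun x hx => capOn_le_of_mem hx))⟩
  · exact (hγ.integrable_mul_id.sub hcapCost).congr (ae_of_all _ fun x => (mul_capOn γ).symm)
  · have hcost := minCapCost_optimalCap_le hγ hp hv0 hvδ
    simp only [id, mul_capOn]
    rw [integral_sub hγ.integrable_mul_id hcapCost, integral_indicator hA, hAt]
    linarith

lemma optimalCap_lt_VaR_id (hγ : IsPricingKernel μ γ) (hp : p ∈ Ioo 0 1)
    (hμ : ∀ᵐ x ∂μ, 0 ≤ x) (hx₀ : x₀ < ∫ x, γ x * x ∂μ) :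
    optimalCap μ p γ (∫ x, γ x * x ∂μ - x₀) < VaR μ p id := by
  set v := VaR μ p id
  have hIic : μ (Iic 0) = 0 := by
    rw [← measure_congr (Iio_ae_eq_Iic' (measure_singleton 0))]
    exact measure_mono_null (fun x hx => not_le.mpr hx) (ae_iff.mp hμ)
  have hv : 0 < v := lt_VaR_of_measure_le_eq_zero measurable_id hp hIic
  set δ := ∫ x, γ x * x ∂μ - x₀
  set ε := min δ v
  have hε : 0 < ε := lt_min (sub_pos.mpr hx₀) hv
  have hcost := minCapCost_le_add hγ hp (sub_le_self v hε.le)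
  have hv0 := minCapCost_VaR_id_nonpos hγ.nonneg hp.2 (μ := μ)
  have : optimalCap μ p γ δ ≤ v - ε :=
    optimalCap_le (sub_nonneg.mpr (min_le_right _ _)) (by linarith [min_le_left δ v])
  linarith

end Optimization

section Transfer

variable {Ω : Type*} [MeasurableSpace Ω] {P : Measure Ω} {X : Ω → ℝ} {γ g : ℝ → ℝ}

lemma memGns_map_iff (hX : Measurable X) (hγ : Measurable γ) {x₀ : ℝ} :
    memGns (P.map X) id γ x₀ g ↔ memGns P X γ x₀ g := by
  refine and_congr_right fun hg => ?_
  have hf : AEStronglyMeasurable (fun x => γ x * g x) (P.map X) :=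
    (hγ.mul hg).aestronglyMeasurable
  simp only [id]
  rw [integrable_map_measure hf hX.aemeasurable, integral_map hX.aemeasurable hf,
    ae_map_iff hX.aemeasurable (p := fun x => 0 ≤ g x ∧ g x ≤ x)
      ((measurableSet_le measurable_const hg).inter (measurableSet_le hg measurable_id))]
  rfl

lemma VaR_map (hX : Measurable X) (hg : Measurable g) (p : ℝ) :
    VaR (P.map X) p g = VaR P p (fun ω => g (X ω)) := by
  unfold VaR
  congr! with x
  rw [Measure.map_apply hX (measurableSet_le hg measurable_const)]
  rfl

lemma isPricingKernel_map [IsProbabilityMeasure P] (hX : Measurable X) (hγ : Measurable γ)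
    (hγ0 : ∀ x, 0 ≤ γ x) (hγi : Integrable (fun ω => γ (X ω)) P) (hγ1 : ∫ ω, γ (X ω) ∂P ≤ 1)
    (hγX : Integrable (fun ω => γ (X ω) * X ω) P) : IsPricingKernel (P.map X) γ where
  measurable := hγ
  nonneg := hγ0
  integrable := (integrable_map_measure hγ.aestronglyMeasurable hX.aemeasurable).mpr hγi
  integral_le_one := by rwa [integral_map hX.aemeasurable hγ.aestronglyMeasurable]
  integrable_mul_id :=
    (integrable_map_measure (by fun_prop) hX.aemeasurable).mpr hγX

end Transfer

theorem stmt1_general {Ω : Type*} [MeasurableSpace Ω] (P : Measure Ω) [IsProbabilityMeasure P]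
    (X : Ω → ℝ) (hXmeas : Measurable X) (hXnonneg : ∀ᵐ ω ∂P, 0 ≤ X ω)
    (hXdens : HasPositiveDensityOnSupport (Measure.map X P))
    (γ : ℝ → ℝ) (hγcont : Continuous γ) (hγpos : ∀ x, 0 < γ x)
    (hγint : Integrable (fun ω => γ (X ω)) P)
    (hγ1 : ∫ ω, γ (X ω) ∂P = 1)
    (hγXint : Integrable (fun ω => γ (X ω) * X ω) P)
    (p : ℝ) (hp : p ∈ Set.Ioo (0 : ℝ) 1)
    (x₀ : ℝ) (hx₀lt : x₀ < ∫ ω, γ (X ω) * X ω ∂P)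
    (q : ℝ)
    (hq : q = sInf {v : ℝ | ∃ g : ℝ → ℝ, memGns P X γ x₀ g ∧ v = VaR P p (fun ω => g (X ω))}) :
    (∃ g : ℝ → ℝ, memGns P X γ x₀ g ∧ VaR P p (fun ω => g (X ω)) = q) ∧ q < VaR P p X := by
  set μ := P.map X
  have : IsProbabilityMeasure μ := Measure.isProbabilityMeasure_map hXmeas.aemeasurable
  have : NullSingletonClass μ := by
    obtain ⟨f, -, hf, -⟩ := hXdens
    rw [hf]
    infer_instance
  have hγ : IsPricingKernel μ γ := isPricingKernel_map hXmeas hγcont.measurable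
    (fun x => (hγpos x).le) hγint hγ1.le hγXint
  have hmem (g : ℝ → ℝ) := memGns_map_iff (P := P) (g := g) (x₀ := x₀) hXmeas hγ.measurable
  have hμ : ∀ᵐ x ∂μ, 0 ≤ x := (ae_map_iff hXmeas.aemeasurable measurableSet_Ici).mpr hXnonneg
  have hM : ∫ x, γ x * x ∂μ = ∫ ω, γ (X ω) * X ω ∂P :=
    integral_map hXmeas.aemeasurable (by fun_prop)
  set t := optimalCap μ p γ (∫ x, γ x * x ∂μ - x₀)
  obtain ⟨g, hg, hgle⟩ := exists_memGns_VaR_le_optimalCap hγ hp hμ (hM ▸ hx₀lt.le)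
  have hgt : VaR P p (fun ω => g (X ω)) = t := by
    rw [← VaR_map hXmeas hg.1]
    exact le_antisymm hgle (optimalCap_le_VaR hγ hp hg)
  have hqt : q = t := by
    refine hq.trans (IsLeast.csInf_eq ⟨⟨g, (hmem g).mp hg, hgt.symm⟩, ?_⟩)
    rintro _ ⟨g', hg', rfl⟩
    rw [← VaR_map hXmeas hg'.1]
    exact optimalCap_le_VaR hγ hp ((hmem g').mpr hg')
  refine ⟨⟨g, (hmem g).mp hg, hgt.trans hqt.symm⟩, ?_⟩
  rw [hqt, show VaR P p X = VaR μ p id from (VaR_map hXmeas measurable_id p).symm]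
  exact optimalCap_lt_VaR_id hγ hp hμ (hM ▸ hx₀lt)

theorem stmt1 {Ω : Type*} [MeasurableSpace Ω] (P : Measure Ω) [IsProbabilityMeasure P]
    (hPatomless : Atomless P)
    (X : Ω → ℝ) (hXmeas : Measurable X) (hXnonneg : ∀ᵐ ω ∂P, 0 ≤ X ω)
    (hXdens : HasPositiveDensityOnSupport (Measure.map X P))
    (γ : ℝ → ℝ) (hγcont : Continuous γ) (hγpos : ∀ x, 0 < γ x)
    (hγint : Integrable (fun ω => γ (X ω)) P)
    (hγ1 : ∫ ω, γ (X ω) ∂P = 1)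
    (hγXint : Integrable (fun ω => γ (X ω) * X ω) P)
    (p : ℝ) (hp : p ∈ Set.Ioo (0 : ℝ) 1)
    (x₀ : ℝ) (hx₀ : 0 ≤ x₀) (hx₀lt : x₀ < ∫ ω, γ (X ω) * X ω ∂P)
    (q : ℝ)
    (hq : q = sInf {v : ℝ | ∃ g : ℝ → ℝ, memGns P X γ x₀ g ∧ v = VaR P p (fun ω => g (X ω))}) :
    (∃ g : ℝ → ℝ, memGns P X γ x₀ g ∧ VaR P p (fun ω => g (X ω)) = q) ∧ q < VaR P p X :=
  stmt1_general P X hXmeas hXnonneg hXdens γ hγcont hγpos hγint hγ1 hγXint p hp x₀ hx₀lt q hq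
end

section
/- Let m > 0, 0 ≤ x₀ < m, let 𝒢_bd be the set of measurable g : ℝ → ℝ with 𝔼[γ(X)·g(X)] ≥ x₀ and 0 ≤ g(X) ≤ m almost surely, and set q' := inf{VaR_p(g(X)) : g ∈ 𝒢_bd}. Assume q' > 0 and ℙ(γ(X) ≤ VaR_p(γ(X))) = p. Then, with c := VaR_p(γ(X)), the minimization of VaR_p(g(X)) over 𝒢_bd admits a ℙ-almost surely unique solution, given by g*(X) = m·𝟙_{γ(X) > c} + q'·𝟙_{γ(X) ≤ c}. -/
open MeasureTheory Filter
open scoped ENNReal Topology Classical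

/-!
Let `B = {γ(X) ≤ c}`, so that `P(B) = p`, and `K = 𝔼[γ(X); B]`. For an admissible `g` with
`v = VaR_p(g(X))` the set `A = {g(X) ≤ v}` has probability at least `p`, and since `γ(X)` is at
most `c` on `B` and above `c` off it, `B` minimises `𝔼[γ(X); A]` among such sets, uniquely up to
null sets (Neyman–Pearson). As `g(X) ≤ v` on `A` and `g(X) ≤ m` off it, the budget constraint
gives `x₀ ≤ m + (v - m) K`, hence `x₀ ≤ m + (q' - m) K` in the limit. If this were strict,
scaling `m 𝟙{γ(X) > c} + q' 𝟙{γ(X) ≤ c}` down to the budget would give VaR below `q'`. So the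
bound is an equality: `g*` is admissible with VaR `q'`, and for any other minimiser every
inequality above is tight, which forces `A = B` and `g(X) = g*(X)` almost surely.
-/

section VaR

variable {Ω : Type*} [MeasurableSpace Ω] {P : Measure Ω} {p : ℝ} {Z : Ω → ℝ}

lemma le_of_ae_le_of_le_measure_le {a x : ℝ} (hp : 0 < p) (ha : ∀ᵐ ω ∂P, a ≤ Z ω)
    (hx : p ≤ (P {ω | Z ω ≤ x}).toReal) : a ≤ x := by
  by_contra! hxa
  have hnull : P {ω | Z ω ≤ x} = 0 :=
    measure_mono_null (fun ω hω => not_le.2 (lt_of_le_of_lt hω hxa)) (ae_iff.1 ha)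
  rw [hnull, ENNReal.toReal_zero] at hx
  linarith

lemma VaR_eq_of_ae_le {a : ℝ} (hp : 0 < p) (ha : ∀ᵐ ω ∂P, a ≤ Z ω)
    (hpa : p ≤ (P {ω | Z ω ≤ a}).toReal) : VaR P p Z = a :=
  IsLeast.csInf_eq ⟨hpa, fun _ hx => le_of_ae_le_of_le_measure_le hp ha hx⟩

variable [IsProbabilityMeasure P]

lemma measure_le_toReal_eq_cdf (hZ : Measurable Z) (x : ℝ) :
    (P {ω | Z ω ≤ x}).toReal = ProbabilityTheory.cdf (P.map Z) x := by
  have := Measure.isProbabilityMeasure_map (μ := P) hZ.aemeasurable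
  rw [ProbabilityTheory.cdf_eq_real, measureReal_def, Measure.map_apply hZ measurableSet_Iic]
  rfl

lemma bddBelow_VaR_set (hZ : Measurable Z) (hp : 0 < p) :
    BddBelow {x : ℝ | p ≤ (P {ω | Z ω ≤ x}).toReal} := by
  obtain ⟨x₁, hx₁⟩ := Filter.eventually_atBot.1
    ((ProbabilityTheory.tendsto_cdf_atBot (P.map Z)).eventually (gt_mem_nhds hp))
  refine ⟨x₁, fun x hx => le_of_not_gt fun hlt => ?_⟩
  have := hx₁ x hlt.le
  rw [Set.mem_ofPred_eq, measure_le_toReal_eq_cdf hZ] at hx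
  linarith

lemma nonempty_VaR_set (hZ : Measurable Z) (hp : p < 1) :
    {x : ℝ | p ≤ (P {ω | Z ω ≤ x}).toReal}.Nonempty := by
  obtain ⟨x₁, hx₁⟩ := Filter.eventually_atTop.1
    ((ProbabilityTheory.tendsto_cdf_atTop (P.map Z)).eventually (lt_mem_nhds hp))
  exact ⟨x₁, by rw [Set.mem_ofPred_eq, measure_le_toReal_eq_cdf hZ]; exact (hx₁ x₁ le_rfl).le⟩

/-- The infimum defining `VaR` is attained, by right-continuity of the distribution function. -/
lemma le_measure_le_VaR (hZ : Measurable Z) (hp : p ∈ Set.Ioo 0 1) :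
    p ≤ (P {ω | Z ω ≤ VaR P p Z}).toReal := by
  set F := ProbabilityTheory.cdf (P.map Z)
  have hright : ∀ᶠ x in 𝓝[>] VaR P p Z, p ≤ F x := by
    refine eventually_nhdsWithin_of_forall fun x hx => ?_
    obtain ⟨s, hs, hsx⟩ := exists_lt_of_csInf_lt (nonempty_VaR_set hZ hp.2) hx
    rw [Set.mem_ofPred_eq, measure_le_toReal_eq_cdf hZ] at hs
    exact hs.trans (F.mono hsx.le)
  rw [measure_le_toReal_eq_cdf hZ]
  exact ge_of_tendsto ((F.right_continuous _).mono Set.Ioi_subset_Ici_self) hright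

lemma le_VaR_of_ae_le {a : ℝ} (hZ : Measurable Z) (hp : p ∈ Set.Ioo 0 1)
    (ha : ∀ᵐ ω ∂P, a ≤ Z ω) : a ≤ VaR P p Z :=
  le_of_ae_le_of_le_measure_le hp.1 ha (le_measure_le_VaR hZ hp)

lemma VaR_le_of_ae_le {M : ℝ} (hZ : Measurable Z) (hp : p ∈ Set.Ioc 0 1)
    (hM : ∀ᵐ ω ∂P, Z ω ≤ M) : VaR P p Z ≤ M := by
  refine csInf_le (bddBelow_VaR_set hZ hp.1) ?_
  rw [Set.mem_ofPred_eq, (mem_ae_iff_prob_eq_one (measurableSet_le hZ measurable_const)).1 hM]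
  simpa using hp.2

end VaR

section Sublevel

variable {Ω : Type*} [MeasurableSpace Ω] {μ : Measure Ω} [IsFiniteMeasure μ] {Y : Ω → ℝ}
  {A B : Set Ω}

lemma setIntegral_sub_setIntegral_eq (hY : Integrable Y μ) (hA : MeasurableSet A)
    (hB : MeasurableSet B) (c : ℝ) :
    ∫ ω in A, Y ω ∂μ - ∫ ω in B, Y ω ∂μ =
      ∫ ω in A \ B, (Y ω - c) ∂μ + ∫ ω in B \ A, (c - Y ω) ∂μ + c * (μ.real A - μ.real B) := by
  have hAB := integral_inter_add_sdiff hB hY.integrableOn (μ := μ) (s := A)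
  have hBA := integral_inter_add_sdiff hA hY.integrableOn (μ := μ) (s := B)
  have hmA := measureReal_inter_add_sdiff (μ := μ) (s := A) hB
  have hmB := measureReal_inter_add_sdiff (μ := μ) (s := B) hA
  rw [Set.inter_comm] at hBA hmB
  rw [integral_sub hY.integrableOn (integrable_const c),
    integral_sub (integrable_const c) hY.integrableOn, setIntegral_const, setIntegral_const,
    smul_eq_mul, smul_eq_mul]
  linear_combination hBA - hAB + c * (hmA - hmB)

variable {c : ℝ}

lemma setIntegral_sublevel_le (hY : Integrable Y μ) (hYm : Measurable Y) (hc : 0 ≤ c)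
    (hA : MeasurableSet A) (hμ : μ.real {ω | Y ω ≤ c} ≤ μ.real A) :
    ∫ ω in {ω | Y ω ≤ c}, Y ω ∂μ ≤ ∫ ω in A, Y ω ∂μ := by
  have hB : MeasurableSet {ω | Y ω ≤ c} := measurableSet_le hYm measurable_const
  have h₁ : 0 ≤ ∫ ω in A \ {ω | Y ω ≤ c}, (Y ω - c) ∂μ :=
    setIntegral_nonneg (hA.diff hB) fun ω hω => sub_nonneg.2 (not_le.1 hω.2).le
  have h₂ : 0 ≤ ∫ ω in {ω | Y ω ≤ c} \ A, (c - Y ω) ∂μ :=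
    setIntegral_nonneg (hB.diff hA) fun ω hω => sub_nonneg.2 hω.1
  have h₃ : 0 ≤ c * (μ.real A - μ.real {ω | Y ω ≤ c}) :=
    mul_nonneg hc (sub_nonneg.2 hμ)
  linarith [setIntegral_sub_setIntegral_eq hY hA hB c]

lemma ae_eq_sublevel_of_setIntegral_eq (hY : Integrable Y μ) (hYm : Measurable Y) (hc : 0 ≤ c)
    (hA : MeasurableSet A) (hμ : μ.real {ω | Y ω ≤ c} ≤ μ.real A)
    (h : ∫ ω in A, Y ω ∂μ = ∫ ω in {ω | Y ω ≤ c}, Y ω ∂μ) : A =ᵐ[μ] {ω | Y ω ≤ c} := by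
  set B := {ω | Y ω ≤ c}
  have hB : MeasurableSet B := measurableSet_le hYm measurable_const
  have h₁ : 0 ≤ᵐ[μ.restrict (A \ B)] fun ω => Y ω - c :=
    (ae_restrict_iff' (hA.diff hB)).2 <| .of_forall fun ω hω => sub_nonneg.2 (not_le.1 hω.2).le
  have h₂ : 0 ≤ ∫ ω in B \ A, (c - Y ω) ∂μ :=
    setIntegral_nonneg (hB.diff hA) fun ω hω => sub_nonneg.2 hω.1
  have h₃ : 0 ≤ c * (μ.real A - μ.real B) := mul_nonneg hc (sub_nonneg.2 hμ)
  have hzero : ∫ ω in A \ B, (Y ω - c) ∂μ = 0 := by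
    linarith [setIntegral_sub_setIntegral_eq hY hA hB c, integral_nonneg_of_ae h₁]
  have hAB : μ (A \ B) = 0 := by
    have hvanish := (setIntegral_eq_zero_iff_of_nonneg_ae h₁
      (hY.sub (integrable_const c)).integrableOn).1 hzero
    rw [EventuallyEq, ae_restrict_iff' (hA.diff hB)] at hvanish
    refine measure_eq_zero_iff_ae_notMem.2 (hvanish.mono fun ω hω hmem => ?_)
    have := hω hmem
    simp only [Pi.zero_apply, sub_eq_zero] at this
    exact hmem.2 this.le
  have hBA : μ.real (B \ A) = 0 := by
    have hmA := measureReal_inter_add_sdiff (μ := μ) (s := A) hB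
    have hmB := measureReal_inter_add_sdiff (μ := μ) (s := B) hA
    rw [Set.inter_comm] at hmB
    linarith [measureReal_nonneg (μ := μ) (s := B \ A),
      (measureReal_eq_zero_iff (by finiteness)).2 hAB]
  exact ae_eq_set.2 ⟨hAB, (measureReal_eq_zero_iff (by finiteness)).1 hBA⟩

end Sublevel

section TwoValued

variable {Ω : Type*} {f : Ω → ℝ} {A : Set Ω} [DecidablePred (· ∈ A)]

lemma mul_ite_mem_eq_add_indicator (a b : ℝ) :
    (fun ω => f ω * if ω ∈ A then b else a) =
      fun ω => a * f ω + A.indicator (fun ω => (b - a) * f ω) ω := by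
  ext ω
  by_cases hω : ω ∈ A <;> simp [hω] <;> ring

variable [MeasurableSpace Ω] {μ : Measure Ω}

lemma MeasureTheory.Integrable.mul_ite_mem (hf : Integrable f μ) (hA : MeasurableSet A) (a b : ℝ) :
    Integrable (fun ω => f ω * if ω ∈ A then b else a) μ := by
  rw [mul_ite_mem_eq_add_indicator]
  exact (hf.const_mul a).add ((hf.const_mul (b - a)).indicator hA)

lemma integral_mul_ite_mem (hf : Integrable f μ) (hA : MeasurableSet A) (a b : ℝ) :
    ∫ ω, f ω * (if ω ∈ A then b else a) ∂μ =
      a * ∫ ω, f ω ∂μ + (b - a) * ∫ ω in A, f ω ∂μ := by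
  rw [mul_ite_mem_eq_add_indicator, integral_add (hf.const_mul a)
    ((hf.const_mul (b - a)).indicator hA), integral_indicator hA, integral_const_mul,
    integral_const_mul]

end TwoValued

section Truncation

variable {Ω : Type*} [MeasurableSpace Ω] {μ : Measure Ω} {W Z : Ω → ℝ} {m v : ℝ}

lemma ae_mul_le_mul_ite_sublevel (hW : ∀ ω, 0 ≤ W ω) (hm : ∀ᵐ ω ∂μ, Z ω ≤ m) :
    (fun ω => W ω * Z ω) ≤ᵐ[μ] fun ω => W ω * if ω ∈ {ω | Z ω ≤ v} then v else m := by
  refine hm.mono fun ω hω => mul_le_mul_of_nonneg_left ?_ (hW ω)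
  split_ifs with h
  exacts [h, hω]

lemma integral_mul_le_of_ae_le (hW : ∀ ω, 0 ≤ W ω) (hWi : Integrable W μ)
    (hWZ : Integrable (fun ω => W ω * Z ω) μ) (hZm : Measurable Z) (hm : ∀ᵐ ω ∂μ, Z ω ≤ m) :
    ∫ ω, W ω * Z ω ∂μ ≤ m * ∫ ω, W ω ∂μ + (v - m) * ∫ ω in {ω | Z ω ≤ v}, W ω ∂μ := by
  have hA : MeasurableSet {ω | Z ω ≤ v} := measurableSet_le hZm measurable_const
  rw [← integral_mul_ite_mem hWi hA]
  exact integral_mono_ae hWZ (hWi.mul_ite_mem hA m v) (ae_mul_le_mul_ite_sublevel hW hm)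

lemma ae_eq_ite_of_integral_mul_eq (hW : ∀ ω, 0 < W ω) (hWi : Integrable W μ)
    (hWZ : Integrable (fun ω => W ω * Z ω) μ) (hZm : Measurable Z) (hm : ∀ᵐ ω ∂μ, Z ω ≤ m)
    (h : ∫ ω, W ω * Z ω ∂μ = m * ∫ ω, W ω ∂μ + (v - m) * ∫ ω in {ω | Z ω ≤ v}, W ω ∂μ) :
    ∀ᵐ ω ∂μ, Z ω = if Z ω ≤ v then v else m := by
  have hA : MeasurableSet {ω | Z ω ≤ v} := measurableSet_le hZm measurable_const
  rw [← integral_mul_ite_mem hWi hA] at h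
  have hle := ae_mul_le_mul_ite_sublevel (v := v) (fun ω => (hW ω).le) hm
  filter_upwards [(integral_eq_iff_of_ae_le hWZ (hWi.mul_ite_mem hA m v) hle).1 h] with ω hω
  exact mul_left_cancel₀ (hW ω).ne' hω

end Truncation

section BoundedPositions

lemma ite_mem_sublevel_eq {Ω : Type*} (Y : Ω → ℝ) (c a b : ℝ) (ω : Ω) :
    (if ω ∈ {ω | Y ω ≤ c} then b else a) = if c < Y ω then a else b := by
  simp only [Set.mem_ofPred_eq, ← not_lt, ite_not]

variable {Ω : Type*} [MeasurableSpace Ω] {P : Measure Ω} {X : Ω → ℝ}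
  {γ : ℝ → ℝ} {p m x₀ c : ℝ} {g : ℝ → ℝ}

lemma integral_mul_ite_lt (hγX : Measurable fun ω => γ (X ω))
    (hγint : Integrable (fun ω => γ (X ω)) P) (hγ1 : ∫ ω, γ (X ω) ∂P = 1) (a b : ℝ) :
    ∫ ω, γ (X ω) * (if c < γ (X ω) then a else b) ∂P =
      a + (b - a) * ∫ ω in {ω | γ (X ω) ≤ c}, γ (X ω) ∂P := by
  have := integral_mul_ite_mem hγint
    (measurableSet_le hγX measurable_const : MeasurableSet {ω | γ (X ω) ≤ c}) a b
  rw [hγ1, mul_one] at this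
  simpa only [ite_mem_sublevel_eq] using this

lemma VaR_ite_lt [IsFiniteMeasure P] (hp : 0 < p) (hcont : p ≤ (P {ω | γ (X ω) ≤ c}).toReal)
    {a b : ℝ} (hba : b ≤ a) : VaR P p (fun ω => if c < γ (X ω) then a else b) = b := by
  refine VaR_eq_of_ae_le hp (.of_forall fun ω => ?_) (hcont.trans ?_)
  · split_ifs
    exacts [hba, le_rfl]
  · refine ENNReal.toReal_mono (measure_ne_top _ _) (measure_mono fun ω hω => ?_)
    simp [not_lt.2 (show γ (X ω) ≤ c from hω)]

lemma memGbd_ite_lt (hXm : Measurable X) (hγ : Measurable γ)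
    (hγint : Integrable (fun ω => γ (X ω)) P) (hγ1 : ∫ ω, γ (X ω) ∂P = 1) {a b : ℝ}
    (hb : 0 ≤ b) (hba : b ≤ a) (ham : a ≤ m)
    (hbudget : x₀ ≤ a + (b - a) * ∫ ω in {ω | γ (X ω) ≤ c}, γ (X ω) ∂P) :
    memGbd P X γ x₀ m (fun x => if c < γ x then a else b) := by
  have hγX : Measurable fun ω => γ (X ω) := hγ.comp hXm
  refine ⟨.ite (measurableSet_lt measurable_const hγ) measurable_const measurable_const, ?_,
    (integral_mul_ite_lt hγX hγint hγ1 a b).symm ▸ hbudget, .of_forall fun ω => ?_⟩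
  · simpa only [ite_mem_sublevel_eq] using
      hγint.mul_ite_mem
        (measurableSet_le hγX measurable_const : MeasurableSet {ω | γ (X ω) ≤ c}) a b
  · dsimp only
    split_ifs
    exacts [⟨hb.trans hba, ham⟩, ⟨hb, hba.trans ham⟩]

namespace memGbd

variable [IsProbabilityMeasure P] (hXm : Measurable X) (hp : p ∈ Set.Ioo 0 1)
  (hg : memGbd P X γ x₀ m g)
include hXm hp hg

lemma VaR_nonneg : 0 ≤ VaR P p (fun ω => g (X ω)) :=
  le_VaR_of_ae_le (hg.1.comp hXm) hp (hg.2.2.2.mono fun _ h => h.1)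

lemma VaR_le : VaR P p (fun ω => g (X ω)) ≤ m :=
  VaR_le_of_ae_le (hg.1.comp hXm) (Set.Ioo_subset_Ioc_self hp) (hg.2.2.2.mono fun _ h => h.2)

variable (hγ : Measurable γ) (hγpos : ∀ x, 0 < γ x) (hγint : Integrable (fun ω => γ (X ω)) P)
  (hc : 0 ≤ c) (hcont : (P {ω | γ (X ω) ≤ c}).toReal ≤ p)
include hγ hγint hc hcont

lemma setIntegral_sublevel_le :
    ∫ ω in {ω | γ (X ω) ≤ c}, γ (X ω) ∂P ≤
      ∫ ω in {ω | g (X ω) ≤ VaR P p (fun ω => g (X ω))}, γ (X ω) ∂P :=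
  _root_.setIntegral_sublevel_le hγint (hγ.comp hXm) hc
    (measurableSet_le (hg.1.comp hXm) measurable_const)
    (hcont.trans (le_measure_le_VaR (hg.1.comp hXm) hp))

include hγpos

lemma le_budget (hγ1 : ∫ ω, γ (X ω) ∂P = 1) :
    x₀ ≤ m + (VaR P p (fun ω => g (X ω)) - m) * ∫ ω in {ω | γ (X ω) ≤ c}, γ (X ω) ∂P :=
  calc x₀ ≤ ∫ ω, γ (X ω) * g (X ω) ∂P := hg.2.2.1
    _ ≤ m * ∫ ω, γ (X ω) ∂P + (VaR P p (fun ω => g (X ω)) - m) *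
          ∫ ω in {ω | g (X ω) ≤ VaR P p (fun ω => g (X ω))}, γ (X ω) ∂P :=
      integral_mul_le_of_ae_le (fun ω => (hγpos _).le) hγint hg.2.1 (hg.1.comp hXm)
        (hg.2.2.2.mono fun _ h => h.2)
    _ ≤ m + (VaR P p (fun ω => g (X ω)) - m) * ∫ ω in {ω | γ (X ω) ≤ c}, γ (X ω) ∂P := by
      rw [hγ1, mul_one]
      exact (add_le_add_iff_left m).2 (mul_le_mul_of_nonpos_left
        (hg.setIntegral_sublevel_le hXm hp hγ hγint hc hcont) (sub_nonpos.2 (hg.VaR_le hXm hp)))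

/-- Tightness of `le_budget` makes each step of its proof an equality: the sublevel set
`{g(X) ≤ v}` is then `{γ(X) ≤ c}` a.e., and `g(X)` is `v` on it and `m` off it. -/
lemma ae_eq_ite_of_VaR_eq (hγ1 : ∫ ω, γ (X ω) ∂P = 1) {v : ℝ}
    (hv : VaR P p (fun ω => g (X ω)) = v) (hvm : v < m)
    (hbudget : m + (v - m) * ∫ ω in {ω | γ (X ω) ≤ c}, γ (X ω) ∂P ≤ x₀) :
    ∀ᵐ ω ∂P, g (X ω) = if c < γ (X ω) then m else v := by
  subst hv
  set v := VaR P p (fun ω => g (X ω))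
  have hKA := hg.setIntegral_sublevel_le hXm hp hγ hγint hc hcont
  have hle := integral_mul_le_of_ae_le (v := v) (fun ω => (hγpos _).le) hγint hg.2.1
    (hg.1.comp hXm) (hg.2.2.2.mono fun _ h => h.2)
  rw [hγ1, mul_one] at hle
  have hsub : ∫ ω in {ω | g (X ω) ≤ v}, γ (X ω) ∂P = ∫ ω in {ω | γ (X ω) ≤ c}, γ (X ω) ∂P :=
    le_antisymm (by nlinarith [hg.2.2.1]) hKA
  have hAB := ae_eq_sublevel_of_setIntegral_eq hγint (hγ.comp hXm) hc
    (measurableSet_le (hg.1.comp hXm) measurable_const)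
    (hcont.trans (le_measure_le_VaR (hg.1.comp hXm) hp)) hsub
  have hgA := ae_eq_ite_of_integral_mul_eq (v := v) (fun ω => hγpos _) hγint hg.2.1
    (hg.1.comp hXm) (hg.2.2.2.mono fun _ h => h.2) <| by
      rw [hγ1, mul_one, hsub]
      exact le_antisymm (hsub ▸ hle) (hbudget.trans hg.2.2.1)
  filter_upwards [hgA, hAB] with ω hω hωAB
  rw [hω, ← ite_mem_sublevel_eq]
  exact if_congr (Iff.of_eq hωAB) rfl rfl

end memGbd

lemma budget_le_of_forall_le_VaR [IsFiniteMeasure P] (hXm : Measurable X) (hγ : Measurable γ)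
    (hγint : Integrable (fun ω => γ (X ω)) P) (hγ1 : ∫ ω, γ (X ω) ∂P = 1) (hp : 0 < p)
    (hcont : p ≤ (P {ω | γ (X ω) ≤ c}).toReal) (hx₀ : 0 ≤ x₀) {q : ℝ} (hq : 0 < q) (hqm : q ≤ m)
    (hmin : ∀ g, memGbd P X γ x₀ m g → q ≤ VaR P p (fun ω => g (X ω))) :
    m + (q - m) * ∫ ω in {ω | γ (X ω) ≤ c}, γ (X ω) ∂P ≤ x₀ := by
  set I := m + (q - m) * ∫ ω in {ω | γ (X ω) ≤ c}, γ (X ω) ∂P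
  by_contra! hlt
  have hI : 0 < I := hx₀.trans_lt hlt
  set t := x₀ / I
  have ht : t < 1 := (div_lt_one hI).2 hlt
  have ht₀ : 0 ≤ t := div_nonneg hx₀ hI.le
  have htq : t * q ≤ t * m := mul_le_mul_of_nonneg_left hqm ht₀
  -- scaling the candidate `m 𝟙{γ > c} + q 𝟙{γ ≤ c}` down to the budget beats `q`
  have hscaled := memGbd_ite_lt (x₀ := x₀) (c := c) hXm hγ hγint hγ1 (mul_nonneg ht₀ hq.le) htq
    (mul_le_of_le_one_left (hq.le.trans hqm) ht.le)
    (by rw [show t * m + (t * q - t * m) * _ = t * I by ring, div_mul_cancel₀ _ hI.ne'])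
  have := hmin _ hscaled
  rw [VaR_ite_lt hp hcont htq] at this
  exact (mul_lt_of_lt_one_left hq ht).not_ge this

end BoundedPositions

theorem stmt8_general {Ω : Type*} [MeasurableSpace Ω] (P : Measure Ω) [IsProbabilityMeasure P]
    (X : Ω → ℝ) (hXmeas : Measurable X)
    (γ : ℝ → ℝ) (hγcont : Continuous γ) (hγpos : ∀ x, 0 < γ x)
    (hγint : Integrable (fun ω => γ (X ω)) P)
    (hγ1 : ∫ ω, γ (X ω) ∂P = 1)
    (p : ℝ) (hp : p ∈ Set.Ioo (0 : ℝ) 1)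
    (m : ℝ) (x₀ : ℝ) (hx₀ : 0 ≤ x₀) (hx₀lt : x₀ < m)
    (q' : ℝ)
    (hq' : q' = sInf {v : ℝ | ∃ g : ℝ → ℝ, memGbd P X γ x₀ m g ∧ v = VaR P p (fun ω => g (X ω))})
    (hqpos : 0 < q')
    (c : ℝ)
    (hcont : (P {ω | γ (X ω) ≤ c}).toReal = p) :
    ∃ g : ℝ → ℝ, memGbd P X γ x₀ m g ∧ VaR P p (fun ω => g (X ω)) = q' ∧
      (∀ᵐ ω ∂P, g (X ω) = if c < γ (X ω) then m else q') ∧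
      ∀ h : ℝ → ℝ, memGbd P X γ x₀ m h → VaR P p (fun ω => h (X ω)) = q' →
        ∀ᵐ ω ∂P, h (X ω) = g (X ω) := by
  have hγ := hγcont.measurable
  set K := ∫ ω in {ω | γ (X ω) ≤ c}, γ (X ω) ∂P
  set V := {v : ℝ | ∃ g : ℝ → ℝ, memGbd P X γ x₀ m g ∧ v = VaR P p (fun ω => g (X ω))}
  have hc : 0 ≤ c := by
    obtain ⟨ω, hω⟩ := nonempty_of_measure_ne_zero (μ := P) (s := {ω | γ (X ω) ≤ c})
      fun h => by simp [h] at hcont; linarith [hp.1]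
    exact (hγpos _).le.trans hω
  have hx₀V : x₀ ∈ V := ⟨_, memGbd_ite_lt hXmeas hγ hγint hγ1 hx₀ le_rfl hx₀lt.le (by simp),
    (VaR_ite_lt hp.1 hcont.ge le_rfl).symm⟩
  have hVbdd : BddBelow V := ⟨0, by rintro _ ⟨g, hg, rfl⟩; exact hg.VaR_nonneg hXmeas hp⟩
  have hqm : q' < m := (hq' ▸ csInf_le hVbdd hx₀V).trans_lt hx₀lt
  have hbudget : m + (q' - m) * K = x₀ := by
    refine le_antisymm (budget_le_of_forall_le_VaR hXmeas hγ hγint hγ1 hp.1 hcont.ge hx₀ hqpos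
      hqm.le fun g hg => hq' ▸ csInf_le hVbdd ⟨g, hg, rfl⟩) ?_
    have hclosed : IsClosed {v : ℝ | x₀ ≤ m + (v - m) * K} :=
      isClosed_le continuous_const (by fun_prop)
    refine hq' ▸ closure_minimal ?_ hclosed (csInf_mem_closure ⟨x₀, hx₀V⟩ hVbdd)
    rintro _ ⟨g, hg, rfl⟩
    exact hg.le_budget hXmeas hp hγ hγpos hγint hc hcont.le hγ1
  refine ⟨fun x => if c < γ x then m else q',
    memGbd_ite_lt hXmeas hγ hγint hγ1 hqpos.le hqm.le le_rfl hbudget.ge,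
    VaR_ite_lt hp.1 hcont.ge hqm.le, .of_forall fun _ => rfl, fun h hh hv => ?_⟩
  exact hh.ae_eq_ite_of_VaR_eq hXmeas hp hγ hγpos hγint hc hcont.le hγ1 hv hqm hbudget.le

theorem stmt8 {Ω : Type*} [MeasurableSpace Ω] (P : Measure Ω) [IsProbabilityMeasure P]
    (hPatomless : Atomless P)
    (X : Ω → ℝ) (hXmeas : Measurable X) (hXnonneg : ∀ᵐ ω ∂P, 0 ≤ X ω)
    (hXdens : HasPositiveDensityOnSupport (Measure.map X P))
    (γ : ℝ → ℝ) (hγcont : Continuous γ) (hγpos : ∀ x, 0 < γ x)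
    (hγint : Integrable (fun ω => γ (X ω)) P)
    (hγ1 : ∫ ω, γ (X ω) ∂P = 1)
    (hγXint : Integrable (fun ω => γ (X ω) * X ω) P)
    (p : ℝ) (hp : p ∈ Set.Ioo (0 : ℝ) 1)
    (m : ℝ) (hm : 0 < m) (x₀ : ℝ) (hx₀ : 0 ≤ x₀) (hx₀lt : x₀ < m)
    (q' : ℝ)
    (hq' : q' = sInf {v : ℝ | ∃ g : ℝ → ℝ, memGbd P X γ x₀ m g ∧ v = VaR P p (fun ω => g (X ω))})
    (hqpos : 0 < q')
    (c : ℝ) (hc : c = VaR P p (fun ω => γ (X ω)))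
    (hcont : (P {ω | γ (X ω) ≤ c}).toReal = p) :
    ∃ g : ℝ → ℝ, memGbd P X γ x₀ m g ∧ VaR P p (fun ω => g (X ω)) = q' ∧
      (∀ᵐ ω ∂P, g (X ω) = if c < γ (X ω) then m else q') ∧
      ∀ h : ℝ → ℝ, memGbd P X γ x₀ m h → VaR P p (fun ω => h (X ω)) = q' →
        ∀ᵐ ω ∂P, h (X ω) = g (X ω) :=
  stmt8_general P X hXmeas γ hγcont hγpos hγint hγ1 p hp m x₀ hx₀ hx₀lt q' hq' hqpos c hcont
end
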